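/- Let $\phi_t$ be a continuous flow on a compact metric space $M$. Suppose there exist $\epsilon,\delta > 0$ such that for every $x \in M$ there is $t_0 \in \mathbb{R}$ with $B^+(x,\delta) \subset \phi_{[t_0-\epsilon,\,t_0+\epsilon]}(x)$, where $B^+(x,\delta) = \{y : d(\phi_u x, \phi_u y) \le \delta \text{ for all } u \ge 0\}$. Then for every $x$, the topological entropy of the time-one map $f = \phi_1$ over the set $B^+(x,\delta)$ is zero, i.e. $h(f, B^+(x,\delta)) = 0$; hence the flow is entropy-expansive with constant $\delta$. -/

import Mathlib

/-!
A compact arc of a single orbit has bounded spanning numbers for every time: by uniform continuity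
of the flow on `[t₀ - ε, t₀ + ε] × M`, finitely many points `φ t x` shadow every `φ s x` of the arc
within `η` for all time, because `φ u (φ s x) = φ s (φ u x)`. Bounded spanning numbers give zero
exponential growth rate.
-/

open Filter Topology

theorem IsCompact.exists_finset_forall_dist_lt {X Y Z : Type*} [PseudoMetricSpace X]
    [PseudoMetricSpace Y] [CompactSpace Y] [PseudoMetricSpace Z] {g : X → Y → Z}
    (hg : Continuous fun p : X × Y => g p.1 p.2) {K : Set X} (hK : IsCompact K) {η : ℝ}
    (hη : 0 < η) : ∃ T : Finset X, ∀ s ∈ K, ∃ t ∈ T, ∀ y, dist (g s y) (g t y) < η := by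
  obtain ⟨ρ, hρ, hgρ⟩ := Metric.uniformContinuousOn_iff.1
    ((hK.prod isCompact_univ).uniformContinuousOn_of_continuous hg.continuousOn) η hη
  obtain ⟨T, hTK, hTfin, hcover⟩ := hK.finite_cover_balls hρ
  refine ⟨hTfin.toFinset, fun s hs => ?_⟩
  obtain ⟨t, ht, hst⟩ := Set.mem_iUnion₂.1 (hcover hs)
  refine ⟨t, hTfin.mem_toFinset.2 ht, fun y => hgρ (s, y) ⟨hs, trivial⟩ (t, y) ⟨hTK ht, trivial⟩ ?_⟩
  simpa [Prod.dist_eq] using hst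

section Flow

variable {M : Type*} {φ : ℝ → M → M}

theorem flow_comm (hφadd : ∀ s t x, φ (s + t) x = φ s (φ t x)) (s t : ℝ) (x : M) :
    φ s (φ t x) = φ t (φ s x) := by
  rw [← hφadd, ← hφadd, add_comm]

theorem iterate_flow_one (hφ0 : ∀ x, φ 0 x = x) (hφadd : ∀ s t x, φ (s + t) x = φ s (φ t x))
    (n : ℕ) (x : M) : (φ 1)^[n] x = φ n x := by
  induction n generalizing x with
  | zero => simp [hφ0]
  | succ n ih => rw [Function.iterate_succ_apply', ih, ← hφadd, Nat.cast_succ, add_comm]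

theorem exists_finset_shadowing_orbit_arc [MetricSpace M] [CompactSpace M]
    (hcont : Continuous fun p : ℝ × M => φ p.1 p.2) (hφadd : ∀ s t x, φ (s + t) x = φ s (φ t x))
    (x : M) {I : Set ℝ} (hI : IsCompact I) {η : ℝ} (hη : 0 < η) :
    ∃ F : Finset M, ∀ y ∈ (fun t => φ t x) '' I, ∃ z ∈ F, ∀ u : ℝ, dist (φ u y) (φ u z) < η := by
  classical
  obtain ⟨T, hT⟩ := hI.exists_finset_forall_dist_lt hcont hη
  refine ⟨T.image (φ · x), ?_⟩
  rintro _ ⟨s, hs, rfl⟩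
  obtain ⟨t, ht, hst⟩ := hT s hs
  refine ⟨φ t x, Finset.mem_image_of_mem _ ht, fun u => ?_⟩
  rw [flow_comm hφadd u, flow_comm hφadd u]
  exact hst (φ u x)

end Flow

theorem tendsto_log_div_atTop_of_le {a : ℕ → ℕ} {C : ℕ} (h : ∀ n, a n ≤ C) :
    Tendsto (fun n : ℕ => Real.log (a n) / n) atTop (𝓝 0) := by
  refine tendsto_of_tendsto_of_tendsto_of_le_of_le tendsto_const_nhds
    (tendsto_const_div_atTop_nhds_zero_nat (C : ℝ)) (fun n => ?_) (fun n => ?_)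
  · exact div_nonneg (Real.log_natCast_nonneg _) n.cast_nonneg
  · refine div_le_div_of_nonneg_right ?_ n.cast_nonneg
    exact (Real.log_le_self (a n).cast_nonneg).trans (by exact_mod_cast h n)

theorem stmt11_general {M : Type*} [MetricSpace M] [CompactSpace M]
    (φ : ℝ → M → M) (hcont : Continuous fun p : ℝ × M => φ p.1 p.2)
    (hφ0 : ∀ x, φ 0 x = x) (hφadd : ∀ s t x, φ (s+t) x = φ s (φ t x))
    (f : M → M) (hf : f = φ 1)
    (Bplus : M → ℝ → Set M)
    (ε δ : ℝ)
    (hexp : ∀ x : M, ∃ t₀ : ℝ, Bplus x δ ⊆ (fun t => φ t x) '' Set.Icc (t₀-ε) (t₀+ε))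
    (r : M → ℕ → ℝ → ℕ)
    (hr : ∀ x n η, r x n η = sInf {m : ℕ | ∃ F : Finset M, F.card = m ∧
      ∀ y ∈ Bplus x δ, ∃ z ∈ F, ∀ i : ℕ, i < n → dist (f^[i] y) (f^[i] z) < η}) :
    ∀ x : M, ∀ η : ℝ, 0 < η →
      Filter.limsup (fun n : ℕ => Real.log (r x n η) / (n:ℝ)) atTop ≤ 0 := by
  intro x η hη
  obtain ⟨t₀, harc⟩ := hexp x
  obtain ⟨F, hF⟩ := exists_finset_shadowing_orbit_arc hcont hφadd x isCompact_Icc hη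
  have hrF : ∀ n, r x n η ≤ F.card := fun n => by
    rw [hr]
    refine Nat.sInf_le ⟨F, rfl, fun y hy => ?_⟩
    obtain ⟨z, hz, hyz⟩ := hF y (harc hy)
    exact ⟨z, hz, fun i _ => by simpa only [hf, iterate_flow_one hφ0 hφadd] using hyz i⟩
  exact (tendsto_log_div_atTop_of_le hrF).limsup_eq.le

theorem stmt11 {M : Type*} [MetricSpace M] [CompactSpace M]
    (φ : ℝ → M → M) (hcont : Continuous fun p : ℝ × M => φ p.1 p.2)
    (hφ0 : ∀ x, φ 0 x = x) (hφadd : ∀ s t x, φ (s+t) x = φ s (φ t x))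
    (f : M → M) (hf : f = φ 1)
    (Bplus : M → ℝ → Set M)
    (hB : ∀ x δ, Bplus x δ = {y | ∀ u : ℝ, 0 ≤ u → dist (φ u x) (φ u y) ≤ δ})
    (ε δ : ℝ) (hε : 0 < ε) (hδ : 0 < δ)
    (hexp : ∀ x : M, ∃ t₀ : ℝ, Bplus x δ ⊆ (fun t => φ t x) '' Set.Icc (t₀-ε) (t₀+ε))
    (r : M → ℕ → ℝ → ℕ)
    (hr : ∀ x n η, r x n η = sInf {m : ℕ | ∃ F : Finset M, F.card = m ∧
      ∀ y ∈ Bplus x δ, ∃ z ∈ F, ∀ i : ℕ, i < n → dist (f^[i] y) (f^[i] z) < η}) :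
    ∀ x : M, ∀ η : ℝ, 0 < η →
      Filter.limsup (fun n : ℕ => Real.log (r x n η) / (n:ℝ)) atTop ≤ 0 :=
  stmt11_general φ hcont hφ0 hφadd f hf Bplus ε δ hexp r hr
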